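/- (Discrete unique continuation.) Let Γ=(H,σ) be a connected signed hypergraph with normalized Laplacian L, and let f be an eigenfunction of L for eigenvalue λ with weak nodal domains D_1,...,D_m. Define g_i = f·1_{D_i} (f restricted to D_i, zero elsewhere). If g = Σ_{i=1}^m a_i g_i with a_i ∈ ℝ is also an eigenfunction of L for λ, then a_1 = a_2 = ⋯ = a_m. -/

import Mathlib

attribute [local instance] Classical.propDecidable

open Finset Matrix

/-! ## Signed hypergraphs (edges indexed by a type `E`; `sign v e ∈ {0, 1, -1}`,
nonzero exactly on incidences) -/

structure SignedHypergraph (V E : Type) where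
  sign : V → E → ℝ
  sign_values : ∀ v e, sign v e = 0 ∨ sign v e = 1 ∨ sign v e = -1

namespace SignedHypergraph

variable {V E : Type} [Fintype V] [Fintype E] [DecidableEq V] [DecidableEq E]

/-- The vertex set of an edge. -/
noncomputable def edgeVerts (G : SignedHypergraph V E) (e : E) : Finset V :=
  Finset.univ.filter fun v => G.sign v e ≠ 0

/-- The degree of a vertex. -/
noncomputable def deg (G : SignedHypergraph V E) (v : V) : ℕ :=
  (Finset.univ.filter fun e : E => G.sign v e ≠ 0).card

/-- The sign of an edge: `sgn e = (-1)^(|e|-1) ∏_{v ∈ e} σ(v,e)`. -/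
noncomputable def edgeSign (G : SignedHypergraph V E) (e : E) : ℝ :=
  (-1 : ℝ) ^ ((G.edgeVerts e).card - 1) * ∏ v ∈ G.edgeVerts e, G.sign v e

/-- The signed adjacency matrix. -/
noncomputable def adj (G : SignedHypergraph V E) : Matrix V V ℝ :=
  Matrix.of fun x y =>
    if x = y then 0
    else ∑ e ∈ Finset.univ.filter (fun e : E => G.sign x e ≠ 0 ∧ G.sign y e ≠ 0), G.edgeSign e

/-- The normalized Laplacian `L = I - D⁻¹ A`. -/
noncomputable def lap (G : SignedHypergraph V E) : Matrix V V ℝ :=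
  Matrix.of fun x y => (if x = y then (1 : ℝ) else 0) - G.adj x y / (G.deg x : ℝ)

/-- The degree-weighted inner product `⟨f, g⟩ = ∑ v deg(v) f(v) g(v)`. -/
noncomputable def dInner (G : SignedHypergraph V E) (f g : V → ℝ) : ℝ :=
  ∑ v : V, (G.deg v : ℝ) * f v * g v

/-- Two vertices share an edge. -/
def Adjacent (G : SignedHypergraph V E) (x y : V) : Prop :=
  ∃ e : E, G.sign x e ≠ 0 ∧ G.sign y e ≠ 0

/-- The underlying hypergraph is connected. -/
def Connected (G : SignedHypergraph V E) : Prop :=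
  ∀ x y : V, Relation.ReflTransGen G.Adjacent x y

/-- One step of a strong nodal domain path: `x, y` in a common edge `e` with
`f x · sgn e · f y > 0`. -/
def sStep (G : SignedHypergraph V E) (f : V → ℝ) (x y : V) : Prop :=
  ∃ e : E, G.sign x e ≠ 0 ∧ G.sign y e ≠ 0 ∧ 0 < f x * G.edgeSign e * f y

/-- The number `𝔖(f)` of strong nodal domains: equivalence classes of the support of `f`
under joining by S-paths. -/
noncomputable def strongDomainCount (G : SignedHypergraph V E) (f : V → ℝ) : ℕ :=
  Set.ncard {D : Set V | ∃ w, f w ≠ 0 ∧ D = {x | Relation.ReflTransGen (G.sStep f) w x}}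

/-- A weak nodal domain path: a walk along edges such that any two consecutive nonzeros
`v i`, `v j` of `f` (joined through zeros by the edges `e i, …, e (j-1)`) satisfy
`f (v i) · sgn (e i) ⋯ sgn (e (j-1)) · f (v j) > 0`. -/
def IsWPath (G : SignedHypergraph V E) (f : V → ℝ) {ℓ : ℕ}
    (v : Fin (ℓ + 1) → V) (e : Fin ℓ → E) : Prop :=
  (∀ t : Fin ℓ, G.sign (v t.castSucc) (e t) ≠ 0 ∧ G.sign (v t.succ) (e t) ≠ 0) ∧
  ∀ i j : Fin (ℓ + 1), i < j → f (v i) ≠ 0 → f (v j) ≠ 0 →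
    (∀ k : Fin (ℓ + 1), i < k → k < j → f (v k) = 0) →
    0 < f (v i) *
        (∏ t : Fin ℓ, if (i : ℕ) ≤ (t : ℕ) ∧ (t : ℕ) < (j : ℕ) then G.edgeSign (e t) else 1) *
        f (v j)

/-- `x` and `y` are joined by a W-path (or equal). -/
def wRel (G : SignedHypergraph V E) (f : V → ℝ) (x y : V) : Prop :=
  x = y ∨ ∃ (ℓ : ℕ) (v : Fin (ℓ + 1) → V) (e : Fin ℓ → E),
    G.IsWPath f v e ∧ v 0 = x ∧ v (Fin.last ℓ) = y

/-- The weak nodal domain of a vertex `w` in the support of `f`: the equivalence class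
of `w` under the W-path relation on the support, enlarged by the zero vertices
W-path-connected to it. -/
def weakDomain (G : SignedHypergraph V E) (f : V → ℝ) (w : V) : Set V :=
  {x | ∃ y, f y ≠ 0 ∧ G.wRel f w y ∧ G.wRel f x y}

def IsWeakNodalDomain (G : SignedHypergraph V E) (f : V → ℝ) (D : Set V) : Prop :=
  ∃ w, f w ≠ 0 ∧ D = G.weakDomain f w

/-- The number `𝔚(f)` of weak nodal domains. -/
noncomputable def weakDomainCount (G : SignedHypergraph V E) (f : V → ℝ) : ℕ :=
  Set.ncard {D : Set V | G.IsWeakNodalDomain f D}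

/-- The number of connected components of the subhypergraph induced on the vertex set `A`
with edges restricted to those satisfying `P`. -/
noncomputable def componentsOn (G : SignedHypergraph V E) (A : Finset V) (P : E → Prop) : ℕ :=
  Set.ncard {C : Set V | ∃ v ∈ A, C =
    {u | u ∈ A ∧ Relation.ReflTransGen
      (fun x y => x ∈ A ∧ y ∈ A ∧ ∃ e, P e ∧ G.sign x e ≠ 0 ∧ G.sign y e ≠ 0) v u}}

/-- The cyclomatic number `l = ∑_e (|e|-1) - |V| + c` of the subhypergraph induced on `A`
with edges restricted to those satisfying `P`. -/
noncomputable def cyclomaticOn (G : SignedHypergraph V E) (A : Finset V) (P : E → Prop) : ℤ :=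
  (∑ e ∈ Finset.univ.filter (fun e : E => P e ∧ (G.edgeVerts e ∩ A).Nonempty),
      (((G.edgeVerts e ∩ A).card : ℤ) - 1)) -
    (A.card : ℤ) + (G.componentsOn A P : ℤ)

/-- An edge all of whose pairs of (distinct) vertices `x, y` satisfy
`f x · sgn e · f y > 0`. -/
def posEdge (G : SignedHypergraph V E) (f : V → ℝ) (e : E) : Prop :=
  ∀ x y : V, G.sign x e ≠ 0 → G.sign y e ≠ 0 → x ≠ y → 0 < f x * G.edgeSign e * f y

/-- An edge of the subhypergraph `S` on the support of `f`. -/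
def sEdge (G : SignedHypergraph V E) (f : V → ℝ) (e : E) : Prop :=
  (∀ v, G.sign v e ≠ 0 → f v ≠ 0) ∧ G.posEdge f e

/-- The subhypergraph with edge set `P` contains a cycle. -/
def HasCycle (G : SignedHypergraph V E) (P : E → Prop) : Prop :=
  ∃ (q : ℕ) (v : Fin (q + 1) → V) (e : Fin q → E), 2 ≤ q ∧
    Function.Injective (fun t : Fin q => v t.castSucc) ∧ Function.Injective e ∧
    v (Fin.last q) = v 0 ∧
    ∀ t : Fin q, P (e t) ∧ G.sign (v t.castSucc) (e t) ≠ 0 ∧ G.sign (v t.succ) (e t) ≠ 0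

/-- A tree-like vertex: its removal increases the number of connected components
by `deg x - 1`. -/
def Treelike (G : SignedHypergraph V E) (x : V) : Prop :=
  (G.componentsOn (Finset.univ.erase x) (fun _ => True) : ℤ) =
    (G.componentsOn Finset.univ (fun _ => True) : ℤ) + (G.deg x : ℤ) - 1

/-- The Fiedler zero set of `f`: zeros `x` of `f` such that either all vertices sharing an
edge with `x` are zeros, or `x` is not tree-like. -/
def fiedlerSet (G : SignedHypergraph V E) (f : V → ℝ) : Set V :=
  {x | f x = 0 ∧ ((∀ y, G.Adjacent x y → f y = 0) ∨ ¬ G.Treelike x)}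

/-- Weak deletion of the vertices in `R`: each vertex of `R` is removed from every hyperedge
(possibly creating empty edges). -/
def weakDelete (G : SignedHypergraph V E) (R : Finset V) :
    SignedHypergraph {v : V // v ∉ R} E :=
  ⟨fun v e => G.sign v.1 e, fun v e => G.sign_values v.1 e⟩

end SignedHypergraph

/-! ## Plain hypergraphs -/

structure PlainHypergraph (V : Type) where
  verts : Finset V
  edges : Finset (Finset V)
  edge_subset : ∀ e ∈ edges, e ⊆ verts

namespace PlainHypergraph

variable {V : Type} [DecidableEq V]

def Adjacent (H : PlainHypergraph V) (x y : V) : Prop := ∃ e ∈ H.edges, x ∈ e ∧ y ∈ e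

def Connected (H : PlainHypergraph V) : Prop :=
  ∀ x ∈ H.verts, ∀ y ∈ H.verts, Relation.ReflTransGen H.Adjacent x y

/-- A cycle: an alternating closed sequence of distinct vertices and distinct edges
`v 0, e 0, v 1, e 1, …, v q = v 0` of length `q ≥ 2` with `v t, v (t+1) ∈ e t`. -/
def IsCycle (H : PlainHypergraph V) {q : ℕ} (v : Fin (q + 1) → V) (e : Fin q → Finset V) : Prop :=
  2 ≤ q ∧ Function.Injective (fun t : Fin q => v t.castSucc) ∧ Function.Injective e ∧
    v (Fin.last q) = v 0 ∧
    ∀ t : Fin q, e t ∈ H.edges ∧ v t.castSucc ∈ e t ∧ v t.succ ∈ e t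

def Acyclic (H : PlainHypergraph V) : Prop :=
  ¬ ∃ (q : ℕ) (v : Fin (q + 1) → V) (e : Fin q → Finset V), H.IsCycle v e

/-- The number of connected components. -/
noncomputable def ncomp (H : PlainHypergraph V) : ℕ :=
  Set.ncard {C : Set V | ∃ v ∈ H.verts, C = {u | Relation.ReflTransGen H.Adjacent v u}}

/-- The cyclomatic number `l(H) = ∑_e (|e|-1) - |V| + c(H)`. -/
noncomputable def cyclomatic (H : PlainHypergraph V) : ℤ :=
  (∑ e ∈ H.edges, ((e.card : ℤ) - 1)) - (H.verts.card : ℤ) + (H.ncomp : ℤ)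

def degree (H : PlainHypergraph V) (x : V) : ℕ := (H.edges.filter fun e => x ∈ e).card

/-- The subhypergraph induced by a vertex set `A`: edges `e ∩ A` for `e ∩ A ≠ ∅`. -/
def induced (H : PlainHypergraph V) (A : Finset V) : PlainHypergraph V where
  verts := H.verts ∩ A
  edges := (H.edges.filter fun e => (e ∩ A).Nonempty).image fun e => e ∩ A
  edge_subset := by
    intro e' he'
    simp only [Finset.mem_image, Finset.mem_filter] at he'
    obtain ⟨e, ⟨heE, -⟩, rfl⟩ := he'
    intro x hx
    rcases Finset.mem_inter.mp hx with ⟨hxe, hxA⟩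
    exact Finset.mem_inter.mpr ⟨H.edge_subset e heE hxe, hxA⟩

/-- A tree-like vertex: deleting it (induced subhypergraph on the remaining vertices)
increases the number of connected components by `deg x - 1`. -/
def Treelike (H : PlainHypergraph V) (x : V) : Prop :=
  ((H.induced (H.verts.erase x)).ncomp : ℤ) = (H.ncomp : ℤ) + (H.degree x : ℤ) - 1

/-- Removal of a vertex together with all edges incident to it. -/
def deleteVert (H : PlainHypergraph V) (y : V) : PlainHypergraph V where
  verts := H.verts.erase y
  edges := H.edges.filter fun e => y ∉ e
  edge_subset := by
    intro e he
    rcases Finset.mem_filter.mp he with ⟨heE, hy⟩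
    intro x hx
    exact Finset.mem_erase.mpr ⟨fun h => hy (h ▸ hx), H.edge_subset e heE hx⟩

/-- A spanning hyperforest of `H`: a maximal acyclic spanning subhypergraph. -/
def IsSpanningHyperforest (H T : PlainHypergraph V) : Prop :=
  T.verts = H.verts ∧ T.edges ⊆ H.edges ∧ T.Acyclic ∧
    ∀ T' : PlainHypergraph V, T'.verts = H.verts → T'.edges ⊆ H.edges → T'.Acyclic →
      T.edges ⊆ T'.edges → T'.edges = T.edges

end PlainHypergraph

/-- The positive index of inertia of a real matrix: the number of positive roots of its
characteristic polynomial, counted with multiplicity. -/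
noncomputable def posInertia {m : Type} [Fintype m] [DecidableEq m] (M : Matrix m m ℝ) : ℕ :=
  (M.charpoly.roots.filter fun x => 0 < x).card

/-- The bordered matrix `[[B, a], [aᵀ, b]]`. -/
def borderMatrix {n : ℕ} (B : Matrix (Fin n) (Fin n) ℝ) (a : Fin n → ℝ) (b : ℝ) :
    Matrix (Fin n ⊕ Unit) (Fin n ⊕ Unit) ℝ :=
  Matrix.fromBlocks B (Matrix.of fun i _ => a i) (Matrix.of fun _ j => a j)
    (Matrix.of fun _ _ => b)

/-!
Write `g = c · f`, where `c x` is the sum of the `a i` over the domains containing `x`; then `c`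
is constant along W-paths. At a zero `z` of `f`, the eigen-equations of `f` and `g` give
`∑ s_p = 0` and `∑ s_p c_p = 0` over the support neighbours `p` of `z`, with
`s_p = sgn e · f p`. Neighbours whose `s_p` have the same sign are W-path-connected through `z`,
so `c` takes a single value on all of them. At a support vertex `x` where `c` is maximal, the
eigen-equations make `∑ f x · s_p · (c x - c p)` vanish while every term is `≤ 0`, so `c` is
maximal at every support neighbour. Runs of zeros are crossed with the invariant that a zero
reached from the maximum set is reached by zero-interior walks of both signs: whichever sign a
support vertex beyond it needs, a W-path is available. Connectivity then spreads the maximum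
over the whole support.
-/

theorem exists_mul_neg_of_sum_eq_zero {ι K : Type*} [CommRing K] [LinearOrder K]
    [IsStrictOrderedRing K] {s : Finset ι} {w : ι → K} (hw : ∑ k ∈ s, w k = 0) {i : ι}
    (hi : i ∈ s) (hwi : w i ≠ 0) : ∃ j ∈ s, w i * w j < 0 := by
  by_contra! hnn
  have : w i * w i ≤ w i * ∑ k ∈ s, w k := by
    rw [mul_sum]
    exact single_le_sum hnn hi
  rw [hw, mul_zero] at this
  exact this.not_gt (mul_self_pos.mpr hwi)

theorem eq_of_sum_eq_zero_of_sum_mul_eq_zero {ι K : Type*} [CommRing K] [LinearOrder K]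
    [IsStrictOrderedRing K] {s : Finset ι} {w c : ι → K} (hw : ∑ k ∈ s, w k = 0)
    (hwc : ∑ k ∈ s, w k * c k = 0) (hsame : ∀ k ∈ s, ∀ l ∈ s, 0 < w k * w l → c k = c l)
    {i j : ι} (hi : i ∈ s) (hj : j ∈ s) (hwi : w i ≠ 0) (hwj : w j ≠ 0) : c i = c j := by
  suffices key : ∀ i ∈ s, ∀ j ∈ s, 0 < w i → w j < 0 → c i = c j by
    rcases hwi.lt_or_gt with hwi | hwi <;> rcases hwj.lt_or_gt with hwj | hwj
    · exact hsame i hi j hj (mul_pos_of_neg_of_neg hwi hwj)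
    · exact (key j hj i hi hwj hwi).symm
    · exact key i hi j hj hwi hwj
    · exact hsame i hi j hj (mul_pos hwi hwj)
  intro i hi j hj hwi hwj
  -- `w k * (c k - c j)` vanishes unless `w k > 0`, in which case `c k = c i`
  have hterm : ∀ k ∈ s, w k * (c k - c j) = max (w k) 0 * (c i - c j) := by
    intro k hk
    rcases lt_trichotomy (w k) 0 with h | h | h
    · rw [hsame k hk j hj (mul_pos_of_neg_of_neg h hwj), max_eq_right h.le]
      ring
    · simp [h]
    · rw [hsame k hk i hi (mul_pos h hwi), max_eq_left h.le]
  have hsum : (∑ k ∈ s, max (w k) 0) * (c i - c j) = 0 := by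
    rw [sum_mul, ← sum_congr rfl hterm]
    simp only [mul_sub, sum_sub_distrib, ← sum_mul, hwc, hw]
    ring
  have hpos : 0 < ∑ k ∈ s, max (w k) 0 :=
    (lt_max_of_lt_left hwi).trans_le (single_le_sum (fun k _ => le_max_right (w k) 0) hi)
  exact sub_eq_zero.mp ((mul_eq_zero.mp hsum).resolve_left hpos.ne')

theorem prod_fin_ite_eq_prod_Ico {M : Type*} [CommMonoid M] (F : ℕ → M) {i j n : ℕ}
    (hj : j ≤ n) :
    (∏ t : Fin n, if i ≤ (t : ℕ) ∧ (t : ℕ) < j then F t else 1) = ∏ t ∈ Ico i j, F t := by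
  rw [Fin.prod_univ_eq_prod_range (fun t => if i ≤ t ∧ t < j then F t else 1) n,
    ← prod_filter]
  congr 1
  ext t
  simp only [mem_filter, mem_range, mem_Ico]
  omega

namespace SignedHypergraph

section WPath

variable {V E : Type} [Fintype V] {G : SignedHypergraph V E} {f : V → ℝ}

theorem edgeSign_ne_zero (G : SignedHypergraph V E) (e : E) : G.edgeSign e ≠ 0 :=
  mul_ne_zero (pow_ne_zero _ (by norm_num))
    (prod_ne_zero_iff.mpr fun _ hv => (mem_filter.mp hv).2)

/-- `IsWPath` with vertices and edges indexed by `ℕ`; only `u 0, …, u n` and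
`ε 0, …, ε (n-1)` matter. -/
def IsNatWPath (G : SignedHypergraph V E) (f : V → ℝ) (n : ℕ) (u : ℕ → V) (ε : ℕ → E) :
    Prop :=
  (∀ t < n, G.sign (u t) (ε t) ≠ 0 ∧ G.sign (u (t + 1)) (ε t) ≠ 0) ∧
  ∀ i j, i < j → j ≤ n → f (u i) ≠ 0 → f (u j) ≠ 0 → (∀ k, i < k → k < j → f (u k) = 0) →
    0 < f (u i) * (∏ t ∈ Ico i j, G.edgeSign (ε t)) * f (u j)

theorem IsNatWPath.wRel {n : ℕ} {u : ℕ → V} {ε : ℕ → E} (h : G.IsNatWPath f n u ε) :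
    G.wRel f (u 0) (u n) := by
  rcases Nat.eq_zero_or_pos n with rfl | hn
  · exact Or.inl rfl
  refine Or.inr ⟨n, fun k => u k, fun t => ε t, ⟨fun t => h.1 t t.isLt, ?_⟩, rfl, rfl⟩
  intro i j hij hi hj hzero
  rw [prod_fin_ite_eq_prod_Ico (fun t => G.edgeSign (ε t)) (Nat.lt_succ_iff.mp j.isLt)]
  exact h.2 i j hij (Nat.lt_succ_iff.mp j.isLt) hi hj fun k hik hkj =>
    hzero ⟨k, by omega⟩ (Fin.lt_def.mpr hik) (Fin.lt_def.mpr hkj)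

theorem IsWPath.isNatWPath {ℓ : ℕ} {v : Fin (ℓ + 2) → V} {e : Fin (ℓ + 1) → E}
    (h : G.IsWPath f v e) :
    G.IsNatWPath f (ℓ + 1) (fun k => v (Fin.clamp k (ℓ + 1))) (fun t => e (Fin.clamp t ℓ)) := by
  have hv : ∀ k (hk : k < ℓ + 2), v (Fin.clamp k (ℓ + 1)) = v ⟨k, hk⟩ := fun k hk =>
    congrArg v (Fin.ext (by simp; omega))
  have he : ∀ t (ht : t < ℓ + 1), e (Fin.clamp t ℓ) = e ⟨t, ht⟩ := fun t ht =>
    congrArg e (Fin.ext (by simp; omega))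
  refine ⟨fun t ht => ?_, fun i j hij hj hi hj' hzero => ?_⟩
  · beta_reduce
    rw [hv t (by omega), hv (t + 1) (by omega), he t ht]
    exact h.1 ⟨t, ht⟩
  · simp only [hv i (by omega), hv j (by omega)] at hi hj' hzero ⊢
    rw [← prod_fin_ite_eq_prod_Ico _ hj]
    simp only [he _ (Fin.is_lt _)]
    exact h.2 ⟨i, by omega⟩ ⟨j, by omega⟩ hij hi hj' fun k hik hkj => by
      simpa only [hv k k.isLt] using hzero k hik hkj

theorem wRel_iff_exists_isNatWPath {x y : V} :
    G.wRel f x y ↔ x = y ∨ ∃ n u ε, G.IsNatWPath f n u ε ∧ u 0 = x ∧ u n = y := by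
  refine ⟨?_, ?_⟩
  · rintro (rfl | ⟨ℓ, v, e, hp, rfl, rfl⟩)
    · exact Or.inl rfl
    rcases ℓ with _ | ℓ
    · exact Or.inl rfl
    exact Or.inr ⟨_, _, _, hp.isNatWPath, congrArg v (Fin.ext (by simp)),
      congrArg v (Fin.ext (by simp))⟩
  · rintro (rfl | ⟨n, u, ε, hp, rfl, rfl⟩)
    · exact Or.inl rfl
    · exact hp.wRel

theorem IsNatWPath.reverse {n : ℕ} {u : ℕ → V} {ε : ℕ → E} (h : G.IsNatWPath f n u ε) :
    G.IsNatWPath f n (fun k => u (n - k)) (fun t => ε (n - 1 - t)) := by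
  refine ⟨fun t ht => ?_, fun i j hij hjn hi hj hzero => ?_⟩
  · have := h.1 (n - 1 - t) (by omega)
    beta_reduce
    rw [show n - 1 - t + 1 = n - t by omega] at this
    rw [show n - (t + 1) = n - 1 - t by omega]
    exact this.symm
  · have hprod := prod_Ico_reflect (fun t => G.edgeSign (ε t)) i (show j ≤ n - 1 + 1 by omega)
    rw [show n - 1 + 1 = n by omega] at hprod
    rw [hprod]
    convert h.2 (n - j) (n - i) (by omega) (by omega) hj hi (fun k hk hk' => ?_) using 1
    · ring
    simpa [show n - (n - k) = k by omega] using hzero (n - k) (by omega) (by omega)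

theorem IsNatWPath.append {n₁ n₂ : ℕ} {u₁ u₂ : ℕ → V} {ε₁ ε₂ : ℕ → E}
    (h₁ : G.IsNatWPath f n₁ u₁ ε₁) (h₂ : G.IsNatWPath f n₂ u₂ ε₂) (hu : u₁ n₁ = u₂ 0)
    (hf : f (u₂ 0) ≠ 0) :
    G.IsNatWPath f (n₁ + n₂) (fun k => if k ≤ n₁ then u₁ k else u₂ (k - n₁))
      (fun t => if t < n₁ then ε₁ t else ε₂ (t - n₁)) := by
  set u := fun k => if k ≤ n₁ then u₁ k else u₂ (k - n₁)
  set ε := fun t => if t < n₁ then ε₁ t else ε₂ (t - n₁)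
  have hu₁ : ∀ k ≤ n₁, u k = u₁ k := fun k hk => if_pos hk
  have hu₂ : ∀ k, u (k + n₁) = u₂ k := fun k => by
    rcases k with _ | k
    · simp [u, hu]
    · simp [u]
  have hε₁ : ∀ t < n₁, ε t = ε₁ t := fun t ht => if_pos ht
  have hε₂ : ∀ t, ε (t + n₁) = ε₂ t := fun t => by simp [ε]
  refine ⟨fun t ht => ?_, fun i j hij hjn hi hj hzero => ?_⟩
  · rcases lt_or_ge t n₁ with ht₁ | ht₁
    · rw [hu₁ t ht₁.le, hu₁ (t + 1) ht₁, hε₁ t ht₁]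
      exact h₁.1 t ht₁
    · obtain ⟨s, rfl⟩ := Nat.exists_eq_add_of_le' ht₁
      rw [hu₂, show s + n₁ + 1 = s + 1 + n₁ by omega, hu₂, hε₂]
      exact h₂.1 s (by omega)
  rcases le_or_gt j n₁ with hj₁ | hj₁
  · rw [prod_congr rfl fun t ht => congrArg G.edgeSign (hε₁ t (by simp at ht; omega))]
    simp only [hu₁ i (by omega), hu₁ j hj₁] at hi hj ⊢
    exact h₁.2 i j hij hj₁ hi hj fun k hk hk' => hu₁ k (by omega) ▸ hzero k hk hk'
  rcases le_or_gt n₁ i with hi₁ | hi₁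
  · obtain ⟨i, rfl⟩ := Nat.exists_eq_add_of_le' hi₁
    obtain ⟨j, rfl⟩ := Nat.exists_eq_add_of_le' hj₁.le
    rw [prod_congr rfl fun t ht =>
        congrArg G.edgeSign (show ε t = ε₂ (t - n₁) from if_neg (by simp at ht; omega)),
      prod_Ico_add_right_sub_eq (f := fun t => G.edgeSign (ε₂ t))]
    simp only [hu₂] at hi hj ⊢
    refine h₂.2 i j (by omega) (by omega) hi hj fun k hk hk' => ?_
    simpa [hu₂] using hzero (k + n₁) (by omega) (by omega)
  · exact absurd (hzero n₁ hi₁ hj₁) (by rwa [hu₁ n₁ le_rfl, hu])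

theorem wRel.symm {x y : V} (h : G.wRel f x y) : G.wRel f y x := by
  rcases wRel_iff_exists_isNatWPath.mp h with rfl | ⟨n, u, ε, hp, rfl, rfl⟩
  · exact Or.inl rfl
  simpa using hp.reverse.wRel

theorem wRel.trans {x y z : V} (hxy : G.wRel f x y) (hyz : G.wRel f y z) (hy : f y ≠ 0) :
    G.wRel f x z := by
  rcases wRel_iff_exists_isNatWPath.mp hxy with rfl | ⟨n₁, u₁, ε₁, hp₁, rfl, rfl⟩
  · exact hyz
  rcases wRel_iff_exists_isNatWPath.mp hyz with rfl | ⟨n₂, u₂, ε₂, hp₂, hu, rfl⟩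
  · exact hxy
  convert (hp₁.append hp₂ hu.symm (hu ▸ hy)).wRel using 1
  · simp
  · rcases n₂ with _ | n₂ <;> simp [hu]

end WPath

section ZeroWalk

variable {V E : Type} {G : SignedHypergraph V E} {f : V → ℝ}

def IsZeroWalk (G : SignedHypergraph V E) (f : V → ℝ) (n : ℕ) (u : ℕ → V) (ε : ℕ → E) :
    Prop :=
  (∀ t < n, G.sign (u t) (ε t) ≠ 0 ∧ G.sign (u (t + 1)) (ε t) ≠ 0) ∧
  ∀ k, 0 < k → k < n → f (u k) = 0

theorem isZeroWalk_zero (u : ℕ → V) (ε : ℕ → E) : G.IsZeroWalk f 0 u ε :=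
  ⟨fun _ ht => absurd ht (Nat.not_lt_zero _), fun _ _ hk => absurd hk (Nat.not_lt_zero _)⟩

variable [Fintype V]

theorem IsZeroWalk.wRel {n : ℕ} {u : ℕ → V} {ε : ℕ → E} (h : G.IsZeroWalk f n u ε)
    (hpos : 0 < f (u 0) * (∏ t ∈ range n, G.edgeSign (ε t)) * f (u n)) :
    G.wRel f (u 0) (u n) := by
  have hp : G.IsNatWPath f n u ε := ⟨h.1, fun i j hij hjn hi hj _ => ?_⟩
  · exact hp.wRel
  obtain rfl : i = 0 := by
    by_contra hi0
    exact hi (h.2 i (by omega) (by omega))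
  obtain rfl : j = n := by
    by_contra hjn'
    exact hj (h.2 j (by omega) (by omega))
  rwa [Finset.range_eq_Ico] at hpos

theorem IsZeroWalk.exists_snoc {n : ℕ} {u : ℕ → V} {ε : ℕ → E} {y : V} {e : E}
    (h : G.IsZeroWalk f n u ε) (hz : 0 < n → f (u n) = 0) (hn : G.sign (u n) e ≠ 0)
    (hy : G.sign y e ≠ 0) :
    ∃ u' ε', G.IsZeroWalk f (n + 1) u' ε' ∧ u' 0 = u 0 ∧ u' (n + 1) = y ∧
      ∏ t ∈ range (n + 1), G.edgeSign (ε' t) =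
        (∏ t ∈ range n, G.edgeSign (ε t)) * G.edgeSign e := by
  refine ⟨fun k => if k ≤ n then u k else y, fun t => if t < n then ε t else e,
    ⟨fun t ht => ?_, fun k hk hk' => ?_⟩, by simp, by simp, ?_⟩
  · rcases lt_or_eq_of_le (Nat.lt_succ_iff.mp ht) with ht | rfl
    · simpa [ht.le, Nat.succ_le_of_lt ht, ht] using h.1 t ht
    · simpa using ⟨hn, hy⟩
  · rcases lt_or_eq_of_le (Nat.lt_succ_iff.mp hk') with hk' | rfl
    · simpa [hk'.le] using h.2 k hk hk'
    · simpa using hz hk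
  · simp only [prod_range_succ, lt_irrefl, if_false]
    congr 1
    exact prod_congr rfl fun t ht => by rw [if_pos (mem_range.mp ht)]

theorem wRel_of_sign_ne_zero {x y : V} {e : E} (hx : G.sign x e ≠ 0)
    (hy : G.sign y e ≠ 0) (hpos : 0 < f x * G.edgeSign e * f y) : G.wRel f x y := by
  obtain ⟨u, ε, hw, h0, h1, hprod⟩ := (isZeroWalk_zero (G := G) (f := f) (fun _ => x)
    (fun _ => e)).exists_snoc (fun h => absurd h (lt_irrefl 0)) hx hy
  rw [← h0, ← h1]
  exact hw.wRel (by rw [h0, h1, hprod]; simpa using hpos)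

def ZeroReachable (G : SignedHypergraph V E) (f : V → ℝ) (S : Set V) (z : V)
    (σ : ℝ) : Prop :=
  ∃ n u ε, G.IsZeroWalk f n u ε ∧ u 0 ∈ S ∧ u n = z ∧
    0 < σ * (f (u 0) * ∏ t ∈ range n, G.edgeSign (ε t))

theorem zeroReachable_of_sign_ne_zero {S : Set V} {x z : V} {e : E} {σ : ℝ}
    (hx : x ∈ S) (hxe : G.sign x e ≠ 0) (hze : G.sign z e ≠ 0)
    (hpos : 0 < σ * (f x * G.edgeSign e)) : G.ZeroReachable f S z σ := by
  obtain ⟨u, ε, hw, h0, h1, hprod⟩ := (isZeroWalk_zero (G := G) (f := f) (fun _ => x)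
    (fun _ => e)).exists_snoc (fun h => absurd h (lt_irrefl 0)) hxe hze
  exact ⟨1, u, ε, hw, h0 ▸ hx, h1, by rw [h0, hprod]; simpa using hpos⟩

theorem ZeroReachable.snoc {S : Set V} {z z' : V} {e : E} {σ : ℝ}
    (h : G.ZeroReachable f S z (σ * G.edgeSign e)) (hz : f z = 0) (hze : G.sign z e ≠ 0)
    (hz'e : G.sign z' e ≠ 0) : G.ZeroReachable f S z' σ := by
  obtain ⟨n, u, ε, hw, hS, rfl, hpos⟩ := h
  obtain ⟨u', ε', hw', h0, h1, hprod⟩ := hw.exists_snoc (fun _ => hz) hze hz'e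
  refine ⟨n + 1, u', ε', hw', h0 ▸ hS, h1, ?_⟩
  rw [h0, hprod]
  linarith [show σ * (f (u 0) * ((∏ t ∈ range n, G.edgeSign (ε t)) * G.edgeSign e)) =
    σ * G.edgeSign e * (f (u 0) * ∏ t ∈ range n, G.edgeSign (ε t)) by ring]

theorem ZeroReachable.exists_wRel {S : Set V} {z y : V} {e : E}
    (h : G.ZeroReachable f S z (G.edgeSign e * f y)) (hz : f z = 0) (hze : G.sign z e ≠ 0)
    (hye : G.sign y e ≠ 0) : ∃ x ∈ S, G.wRel f x y := by
  obtain ⟨n, u, ε, hw, hS, rfl, hpos⟩ := h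
  obtain ⟨u', ε', hw', h0, h1, hprod⟩ := hw.exists_snoc (fun _ => hz) hze hye
  refine ⟨u 0, hS, h0 ▸ h1 ▸ hw'.wRel ?_⟩
  rw [h0, h1, hprod]
  linarith [show f (u 0) * ((∏ t ∈ range n, G.edgeSign (ε t)) * G.edgeSign e) * f y =
    G.edgeSign e * f y * (f (u 0) * ∏ t ∈ range n, G.edgeSign (ε t)) by ring]

end ZeroWalk

section WeakNodalDomain

variable {V E : Type} [Fintype V] {G : SignedHypergraph V E} {f : V → ℝ}

theorem mem_weakDomain_iff {w y : V} (hy : f y ≠ 0) :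
    y ∈ G.weakDomain f w ↔ G.wRel f w y :=
  ⟨fun ⟨_, hy₁, hwy₁, hyy₁⟩ => hwy₁.trans hyy₁.symm hy₁, fun h => ⟨y, hy, h, Or.inl rfl⟩⟩

theorem weakDomain_eq_of_wRel {w w' : V} (hw : f w ≠ 0) (hw' : f w' ≠ 0)
    (h : G.wRel f w w') : G.weakDomain f w = G.weakDomain f w' := by
  ext x
  exact ⟨fun ⟨y, hy, hwy, hxy⟩ => ⟨y, hy, h.symm.trans hwy hw, hxy⟩,
    fun ⟨y, hy, hwy, hxy⟩ => ⟨y, hy, h.trans hwy hw', hxy⟩⟩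

theorem IsWeakNodalDomain.mem_iff_of_wRel {C : Set V} (hC : G.IsWeakNodalDomain f C)
    {x y : V} (hx : f x ≠ 0) (hy : f y ≠ 0) (hxy : G.wRel f x y) : x ∈ C ↔ y ∈ C := by
  obtain ⟨w, hw, rfl⟩ := hC
  rw [mem_weakDomain_iff hx, mem_weakDomain_iff hy]
  exact ⟨fun h => h.trans hxy hx, fun h => h.trans hxy.symm hy⟩

theorem IsWeakNodalDomain.eq_of_mem {C C' : Set V} (hC : G.IsWeakNodalDomain f C)
    (hC' : G.IsWeakNodalDomain f C') {y : V} (hy : f y ≠ 0) (h : y ∈ C) (h' : y ∈ C') :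
    C = C' := by
  obtain ⟨w, hw, rfl⟩ := hC
  obtain ⟨w', hw', rfl⟩ := hC'
  rw [mem_weakDomain_iff hy] at h
  rw [mem_weakDomain_iff hy] at h'
  exact weakDomain_eq_of_wRel hw hw' (h.trans h'.symm hy)

theorem IsWeakNodalDomain.exists_mem {C : Set V} (hC : G.IsWeakNodalDomain f C) :
    ∃ w ∈ C, f w ≠ 0 := by
  obtain ⟨w, hw, rfl⟩ := hC
  exact ⟨w, ⟨w, hw, Or.inl rfl, Or.inl rfl⟩, hw⟩

end WeakNodalDomain

section Laplacian

variable {V E : Type} [Fintype E] {G : SignedHypergraph V E}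

theorem deg_ne_zero {x : V} {e : E} (h : G.sign x e ≠ 0) : (G.deg x : ℝ) ≠ 0 :=
  Nat.cast_ne_zero.mpr (card_ne_zero.mpr ⟨e, mem_filter.mpr ⟨mem_univ _, h⟩⟩)

variable [Fintype V]

noncomputable def incidentPairs (G : SignedHypergraph V E) (x : V) : Finset (V × E) :=
  univ.filter fun p => p.1 ≠ x ∧ G.sign x p.2 ≠ 0 ∧ G.sign p.1 p.2 ≠ 0

theorem mem_incidentPairs {x : V} {p : V × E} :
    p ∈ G.incidentPairs x ↔ p.1 ≠ x ∧ G.sign x p.2 ≠ 0 ∧ G.sign p.1 p.2 ≠ 0 := by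
  simp [incidentPairs]

variable [DecidableEq V]

theorem adj_mulVec_apply (F : V → ℝ) (x : V) :
    (G.adj *ᵥ F) x = ∑ p ∈ G.incidentPairs x, G.edgeSign p.2 * F p.1 := by
  rw [incidentPairs, sum_filter, Fintype.sum_prod_type]
  refine sum_congr rfl fun y _ => ?_
  by_cases hxy : x = y
  · simp [adj, hxy]
  · simp only [adj, of_apply, if_neg hxy, sum_mul, sum_filter]
    refine sum_congr rfl fun e _ => ?_
    simp [Ne.symm hxy]

theorem lap_mulVec_apply (F : V → ℝ) (x : V) :
    (G.lap *ᵥ F) x = F x - (G.adj *ᵥ F) x / G.deg x := by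
  simp [lap, mulVec, dotProduct, sub_mul, ite_mul, sum_sub_distrib, sum_div, div_mul_eq_mul_div]

theorem sum_incidentPairs_of_lap_mulVec_eq {lam : ℝ} {F : V → ℝ} (hF : G.lap *ᵥ F = lam • F)
    {x : V} (hx : (G.deg x : ℝ) ≠ 0) :
    ∑ p ∈ G.incidentPairs x, G.edgeSign p.2 * F p.1 = (1 - lam) * G.deg x * F x := by
  have h := congrFun hF x
  rw [lap_mulVec_apply, adj_mulVec_apply, Pi.smul_apply, smul_eq_mul] at h
  field_simp at h
  linarith

end Laplacian

section UniqueContinuation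

variable {V E : Type} [Fintype V] [Fintype E] [DecidableEq V] {G : SignedHypergraph V E}
  {f c : V → ℝ} {lam : ℝ}

theorem coeff_eq_of_mem_incidentPairs_of_eq_zero (hf : G.lap *ᵥ f = lam • f)
    (hcf : G.lap *ᵥ (fun x => c x * f x) = lam • fun x => c x * f x)
    (hc : ∀ x y, f x ≠ 0 → f y ≠ 0 → G.wRel f x y → c x = c y) {z : V} (hz : f z = 0)
    {p q : V × E} (hp : p ∈ G.incidentPairs z) (hq : q ∈ G.incidentPairs z)
    (hp' : f p.1 ≠ 0) (hq' : f q.1 ≠ 0) : c p.1 = c q.1 := by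
  have hdeg := deg_ne_zero (mem_incidentPairs.mp hp).2.1
  refine eq_of_sum_eq_zero_of_sum_mul_eq_zero (w := fun r => G.edgeSign r.2 * f r.1)
    (c := fun r => c r.1) ?_ ?_ ?_ hp hq (mul_ne_zero (G.edgeSign_ne_zero _) hp')
    (mul_ne_zero (G.edgeSign_ne_zero _) hq')
  · rw [sum_incidentPairs_of_lap_mulVec_eq hf hdeg, hz, mul_zero]
  · have h := sum_incidentPairs_of_lap_mulVec_eq hcf hdeg
    rw [hz, mul_zero, mul_zero] at h
    rw [← h]
    exact sum_congr rfl fun r _ => by ring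
  · -- same-sign neighbours are joined through `z` by a W-path
    intro r hr r' hr' hpos
    obtain ⟨-, hzr, hrr⟩ := mem_incidentPairs.mp hr
    obtain ⟨-, hzr', hrr'⟩ := mem_incidentPairs.mp hr'
    have hr₁ : f r.1 ≠ 0 := fun h => by simp [h] at hpos
    have hr'₁ : f r'.1 ≠ 0 := fun h => by simp [h] at hpos
    obtain ⟨x, rfl, hx⟩ := (zeroReachable_of_sign_ne_zero (S := {r.1})
      (σ := G.edgeSign r'.2 * f r'.1) rfl hrr hzr (by linarith)).exists_wRel hz hzr' hrr'
    exact hc _ _ hr₁ hr'₁ hx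

theorem coeff_eq_of_mem_incidentPairs_of_isMax (hf : G.lap *ᵥ f = lam • f)
    (hcf : G.lap *ᵥ (fun x => c x * f x) = lam • fun x => c x * f x)
    (hc : ∀ x y, f x ≠ 0 → f y ≠ 0 → G.wRel f x y → c x = c y) {x : V} (hx : f x ≠ 0)
    (hmax : ∀ y, f y ≠ 0 → c y ≤ c x) {p : V × E} (hp : p ∈ G.incidentPairs x)
    (hp' : f p.1 ≠ 0) : c p.1 = c x := by
  have hdeg := deg_ne_zero (mem_incidentPairs.mp hp).2.1
  set t : V × E → ℝ := fun r => f x * (G.edgeSign r.2 * f r.1) * (c x - c r.1)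
  have hsum : ∑ r ∈ G.incidentPairs x, t r = 0 := by
    calc ∑ r ∈ G.incidentPairs x, t r
        = f x * (c x * ∑ r ∈ G.incidentPairs x, G.edgeSign r.2 * f r.1 -
            ∑ r ∈ G.incidentPairs x, G.edgeSign r.2 * (c r.1 * f r.1)) := by
          rw [mul_sum, ← sum_sub_distrib, mul_sum]
          exact sum_congr rfl fun r _ => by ring
      _ = 0 := by
          rw [sum_incidentPairs_of_lap_mulVec_eq hf hdeg,
            sum_incidentPairs_of_lap_mulVec_eq hcf hdeg]
          ring
  -- a term with `f x * sgn e * f y > 0` joins `x` and `y` by a W-path, so `c y = c x`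
  have hnonpos : ∀ r ∈ G.incidentPairs x, t r ≤ 0 := by
    intro r hr
    by_cases hr' : f r.1 = 0
    · simp [t, hr']
    rcases le_or_gt (f x * (G.edgeSign r.2 * f r.1)) 0 with hneg | hpos
    · exact mul_nonpos_of_nonpos_of_nonneg hneg (sub_nonneg.mpr (hmax r.1 hr'))
    · obtain ⟨-, hxr, hrr⟩ := mem_incidentPairs.mp hr
      simp [t, hc x r.1 hx hr' (wRel_of_sign_ne_zero hxr hrr (by linarith))]
  have hp0 := (sum_eq_zero_iff_of_nonpos hnonpos).mp hsum p hp
  have hne : f x * (G.edgeSign p.2 * f p.1) ≠ 0 :=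
    mul_ne_zero hx (mul_ne_zero (G.edgeSign_ne_zero _) hp')
  linarith [sub_eq_zero.mp ((mul_eq_zero.mp hp0).resolve_left hne)]

theorem zeroReachable_of_adj (hf : G.lap *ᵥ f = lam • f)
    (hcf : G.lap *ᵥ (fun x => c x * f x) = lam • fun x => c x * f x)
    (hc : ∀ x y, f x ≠ 0 → f y ≠ 0 → G.wRel f x y → c x = c y) {x z : V} {e : E}
    (hx : f x ≠ 0) (hz : f z = 0) (hxe : G.sign x e ≠ 0) (hze : G.sign z e ≠ 0) {σ : ℝ}
    (hσ : σ ≠ 0) : G.ZeroReachable f {y | f y ≠ 0 ∧ c y = c x} z σ := by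
  have hp : (x, e) ∈ G.incidentPairs z :=
    mem_incidentPairs.mpr ⟨fun h : x = z => hx (h ▸ hz), hze, hxe⟩
  have hsum := sum_incidentPairs_of_lap_mulVec_eq hf (deg_ne_zero hze)
  rw [hz, mul_zero] at hsum
  -- `z` also has a neighbour `q` on the other side, with the same coefficient as `x`
  obtain ⟨q, hq, hneg⟩ :=
    exists_mul_neg_of_sum_eq_zero hsum hp (mul_ne_zero (G.edgeSign_ne_zero e) hx)
  have hq' : f q.1 ≠ 0 := fun h => by simp [h] at hneg
  have hcq := coeff_eq_of_mem_incidentPairs_of_eq_zero hf hcf hc hz hp hq hx hq'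
  obtain ⟨-, hzq, hqq⟩ := mem_incidentPairs.mp hq
  rcases le_or_gt (σ * (f x * G.edgeSign e)) 0 with hσx | hσx
  · refine zeroReachable_of_sign_ne_zero ⟨hq', hcq.symm⟩ hqq hzq ?_
    nlinarith [sq_pos_of_ne_zero hσ]
  · exact zeroReachable_of_sign_ne_zero ⟨hx, rfl⟩ hxe hze hσx

theorem coeff_eq_of_connected (hconn : G.Connected) (hf : G.lap *ᵥ f = lam • f)
    (hcf : G.lap *ᵥ (fun x => c x * f x) = lam • fun x => c x * f x)
    (hc : ∀ x y, f x ≠ 0 → f y ≠ 0 → G.wRel f x y → c x = c y) {x y : V} (hx : f x ≠ 0)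
    (hy : f y ≠ 0) : c x = c y := by
  obtain ⟨x₀, hx₀, hmax⟩ := exists_max_image (univ.filter fun v => f v ≠ 0) c
    ⟨x, mem_filter.mpr ⟨mem_univ x, hx⟩⟩
  replace hx₀ : f x₀ ≠ 0 := (mem_filter.mp hx₀).2
  replace hmax : ∀ v, f v ≠ 0 → c v ≤ c x₀ := fun v hv => hmax v (mem_filter.mpr ⟨mem_univ v, hv⟩)
  -- zeros reached from the maximum set are reached by walks of both signs
  have key : ∀ v, Relation.ReflTransGen G.Adjacent x₀ v → (f v ≠ 0 → c v = c x₀) ∧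
      (f v = 0 → ∀ σ ≠ 0, G.ZeroReachable f {y | f y ≠ 0 ∧ c y = c x₀} v σ) := by
    intro v hv
    induction hv with
    | refl => exact ⟨fun _ => rfl, fun h => absurd h hx₀⟩
    | @tail b d _ hbd ih =>
      obtain ⟨e, hbe, hde⟩ := hbd
      by_cases hb : f b = 0
      · refine ⟨fun hd => ?_, fun hd σ hσ => ?_⟩
        · obtain ⟨w, ⟨hw, hcw⟩, hwd⟩ :=
            (ih.2 hb _ (mul_ne_zero (G.edgeSign_ne_zero e) hd)).exists_wRel hb hbe hde
          rw [← hc w d hw hd hwd, hcw]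
        · exact (ih.2 hb _ (mul_ne_zero hσ (G.edgeSign_ne_zero e))).snoc hb hbe hde
      · have hcb := ih.1 hb
        refine ⟨fun hd => ?_, fun hd σ hσ => hcb ▸ zeroReachable_of_adj hf hcf hc hb hd hbe hde hσ⟩
        by_cases hdb : d = b
        · exact hdb ▸ hcb
        rw [coeff_eq_of_mem_incidentPairs_of_isMax hf hcf hc hb (hcb ▸ hmax) (p := (d, e))
          (mem_incidentPairs.mpr ⟨hdb, hbe, hde⟩) hd, hcb]
  rw [(key x (hconn x₀ x)).1 hx, (key y (hconn x₀ y)).1 hy]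

end UniqueContinuation

end SignedHypergraph

variable {V E : Type} [Fintype V] [Fintype E] [DecidableEq V] [DecidableEq E]

theorem stmt8_general (G : SignedHypergraph V E) (hconn : G.Connected) (lam : ℝ) (f : V → ℝ)
    (hf : G.lap.mulVec f = lam • f)
    (m : ℕ) (D : Fin m → Set V) (hinj : Function.Injective D)
    (hdom : ∀ i, G.IsWeakNodalDomain f (D i))
    (a : Fin m → ℝ)
    (hg : G.lap.mulVec (fun x => ∑ i : Fin m, a i * if x ∈ D i then f x else 0) =
      lam • fun x => ∑ i : Fin m, a i * if x ∈ D i then f x else 0) :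
    ∀ i j : Fin m, a i = a j := by
  set c : V → ℝ := fun x => ∑ k, if x ∈ D k then a k else 0
  have hgc : (fun x => ∑ k, a k * if x ∈ D k then f x else 0) = fun x => c x * f x := by
    funext x
    simp only [c, sum_mul]
    exact sum_congr rfl fun k _ => by split_ifs <;> ring
  rw [hgc] at hg
  have hc : ∀ x y, f x ≠ 0 → f y ≠ 0 → G.wRel f x y → c x = c y := fun x y hx hy hxy =>
    sum_congr rfl fun k _ => by rw [(hdom k).mem_iff_of_wRel hx hy hxy]
  have hcoeff : ∀ k, ∃ w, f w ≠ 0 ∧ c w = a k := by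
    intro k
    obtain ⟨w, hwk, hw⟩ := (hdom k).exists_mem
    refine ⟨w, hw, (sum_eq_single k (fun l _ hlk => if_neg fun hwl => hlk ?_) (by simp)).trans
      (if_pos hwk)⟩
    exact hinj ((hdom l).eq_of_mem (hdom k) hw hwl hwk)
  intro i j
  obtain ⟨wi, hwi, hci⟩ := hcoeff i
  obtain ⟨wj, hwj, hcj⟩ := hcoeff j
  rw [← hci, ← hcj]
  exact SignedHypergraph.coeff_eq_of_connected hconn hf hg hc hwi hwj

theorem stmt8 (G : SignedHypergraph V E) (hconn : G.Connected) (lam : ℝ) (f : V → ℝ)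
    (hf0 : f ≠ 0) (hf : G.lap.mulVec f = lam • f)
    (m : ℕ) (D : Fin m → Set V) (hinj : Function.Injective D)
    (hdom : ∀ i, G.IsWeakNodalDomain f (D i))
    (hall : ∀ C : Set V, G.IsWeakNodalDomain f C → ∃ i, C = D i)
    (a : Fin m → ℝ)
    (hg0 : (fun x => ∑ i : Fin m, a i * if x ∈ D i then f x else 0) ≠ 0)
    (hg : G.lap.mulVec (fun x => ∑ i : Fin m, a i * if x ∈ D i then f x else 0) =
      lam • fun x => ∑ i : Fin m, a i * if x ∈ D i then f x else 0) :
    ∀ i j : Fin m, a i = a j :=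
  stmt8_general G hconn lam f hf m D hinj hdom a hg
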